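/- arXiv:1602.01903 — 8 statements merged into one kernel-verified Lean document; each statement's English description precedes it below -/
import Mathlib

section
/- For all natural numbers k and n, M(k,n) = (k+2)^(n+2). (This is Moessner's theorem expressed via the explicit arithmetic description of Moessner's sieve.) -/
def gAux : ℕ → ℕ → ℕ → ℕ → ℕ
  | 0, i, x, n => i * (n + 2) + x + 1
  | m + 1, i, x, n =>
      (∑ a ∈ Finset.range (x + 1), gAux m i a n) +
        ∑ j ∈ Finset.range i, ∑ a ∈ Finset.range (n + 1 - m), gAux m j a n

def g (i m x n : ℕ) : ℕ := gAux m i x n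

def Δ (i n : ℕ) : ℕ := ∑ m ∈ Finset.range (n + 1), ∑ x ∈ Finset.range (n + 1 - m), g i m x n

def M (k n : ℕ) : ℕ := (k + 1) * (n + 2) + 1 + ∑ i ∈ Finset.range (k + 1), Δ i n

/-!
Writing `y = n - m - x` for the distance of `x` from the end of row `m`, the entries have the
closed form `g i m x n = ∑_{s ≤ m+1} (-1)^s C(n+2, m+1-s) C(y+s, s) (i+1)^(m+1-s)`. It is proved
by induction on `m`: by the hockey-stick identity a partial row sum of the closed form is again
an alternating sum of the same shape, and for a full row the trinomial revision
`C(n+2, m+1-s) C(n-m+1+s, s+1) = C(n+2, m+2) C(m+2, s+1)` collapses it, by the binomial theorem,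
to `C(n+2, m+2) ((i+1)^(m+2) - i^(m+2))`. Summing over `i ≤ k` telescopes to
`∑_m C(n+2, m+2) (k+1)^(m+2)`, which together with `(k+1)(n+2) + 1` is the binomial expansion of
`((k+1) + 1)^(n+2)`.
-/

open Finset

lemma sum_range_add_choose' (y s : ℕ) :
    ∑ t ∈ range y, (t + s).choose s = (y + s).choose (s + 1) := by
  cases y with
  | zero => simp
  | succ y => rw [Nat.sum_range_add_choose, Nat.add_right_comm]

lemma choose_mul_choose_sub (N a b : ℕ) :
    N.choose a * (N - a).choose b = N.choose (a + b) * (a + b).choose b := by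
  rw [← Nat.choose_symm_add, Nat.choose_mul (Nat.le_add_right a b), Nat.add_sub_cancel_left]

lemma pow_sub_sub_one_pow {R : Type*} [CommRing R] (u : R) (p : ℕ) :
    u ^ p - (u - 1) ^ p = ∑ s ∈ range p, (-1) ^ s * (p.choose (s + 1) : R) * u ^ (p - (s + 1)) := by
  rw [show u - 1 = -1 + u by ring, add_pow, sum_range_succ']
  simp only [pow_succ, pow_zero, Nat.choose_zero_right, Nat.sub_zero, Nat.cast_one, one_mul,
    mul_one]
  rw [sub_add_eq_sub_sub, sub_sub_cancel_left, ← sum_neg_distrib]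
  refine sum_congr rfl fun s _ => ?_
  ring

lemma sum_range_sub_reflect {G : Type*} [AddCommGroup G] (f : ℕ → G) {x N : ℕ} (hx : x ≤ N) :
    ∑ a ∈ range (x + 1), f (N - a) = ∑ t ∈ range (N + 1), f t - ∑ t ∈ range (N - x), f t := by
  rw [range_eq_Ico, sum_Ico_reflect _ _ (by omega), ← sum_Ico_eq_sub _ (by omega)]
  congr 2; omega

lemma sum_range_mul_succ_pow_sub_pow {R : Type*} [CommRing R] (c : R) {p : ℕ} (hp : p ≠ 0)
    (k : ℕ) : ∑ j ∈ range k, c * (((j : R) + 1) ^ p - (j : R) ^ p) = c * (k : R) ^ p := by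
  simpa [mul_sub, hp] using sum_range_sub (fun j : ℕ => c * (j : R) ^ p) k

lemma add_one_pow_add_two {R : Type*} [CommSemiring R] (u : R) (n : ℕ) :
    (u + 1) ^ (n + 2) =
      (n + 2) * u + 1 + ∑ m ∈ range (n + 1), ((n + 2).choose (m + 2) : R) * u ^ (m + 2) := by
  rw [add_pow, sum_range_succ', sum_range_succ']
  simp only [one_pow, mul_one, zero_add, Nat.choose_zero_right, Nat.choose_one_right, pow_zero,
    pow_one, Nat.cast_one]
  push_cast
  rw [add_assoc, add_comm]
  congr 1
  · ring
  · exact sum_congr rfl fun m _ => mul_comm _ _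

def gClosed (n m i y : ℕ) : ℤ :=
  ∑ s ∈ range (m + 2), (-1) ^ s * ((n + 2).choose (m + 1 - s) : ℤ) * ((y + s).choose s : ℤ) *
    ((i : ℤ) + 1) ^ (m + 1 - s)

lemma sum_range_gClosed (n m i y : ℕ) :
    ∑ t ∈ range y, gClosed n m i t =
      ∑ s ∈ range (m + 2), (-1) ^ s * ((n + 2).choose (m + 1 - s) : ℤ) *
        ((y + s).choose (s + 1) : ℤ) * ((i : ℤ) + 1) ^ (m + 1 - s) := by
  simp only [gClosed]
  rw [sum_comm]
  refine sum_congr rfl fun s _ => ?_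
  rw [← sum_mul, ← mul_sum, ← Nat.cast_sum, sum_range_add_choose']

lemma gClosed_succ (n m i y : ℕ) :
    gClosed n (m + 1) i y =
      ((n + 2).choose (m + 2) : ℤ) * ((i : ℤ) + 1) ^ (m + 2) -
        ∑ t ∈ range (y + 1), gClosed n m i t := by
  have hcancel : ∀ s ∈ range (m + 2),
      (-1) ^ (s + 1) * ((n + 2).choose (m + 1 + 1 - (s + 1)) : ℤ) *
          ((y + (s + 1)).choose (s + 1) : ℤ) * ((i : ℤ) + 1) ^ (m + 1 + 1 - (s + 1)) +
        (-1) ^ s * ((n + 2).choose (m + 1 - s) : ℤ) * ((y + 1 + s).choose (s + 1) : ℤ) *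
          ((i : ℤ) + 1) ^ (m + 1 - s) = 0 := by
    intro s _
    rw [Nat.add_sub_add_right, ← add_assoc, Nat.add_right_comm y 1 s, pow_succ]
    ring
  rw [sum_range_gClosed, gClosed, sum_range_succ', eq_sub_iff_add_eq, add_right_comm,
    ← sum_add_distrib, sum_congr rfl hcancel]
  simp

lemma sum_range_gClosed_row {n m : ℕ} (hm : m ≤ n) (i : ℕ) :
    ∑ t ∈ range (n - m + 1), gClosed n m i t =
      ((n + 2).choose (m + 2) : ℤ) * (((i : ℤ) + 1) ^ (m + 2) - (i : ℤ) ^ (m + 2)) := by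
  have hchoose : ∀ s ∈ range (m + 2),
      (n + 2).choose (m + 1 - s) * (n - m + 1 + s).choose (s + 1) =
        (n + 2).choose (m + 2) * (m + 2).choose (s + 1) := by
    intro s hs
    rw [mem_range] at hs
    have h := choose_mul_choose_sub (n + 2) (m + 1 - s) (s + 1)
    rwa [show n + 2 - (m + 1 - s) = n - m + 1 + s by omega,
      show m + 1 - s + (s + 1) = m + 2 by omega] at h
  have hbinom := pow_sub_sub_one_pow ((i : ℤ) + 1) (m + 2)
  rw [add_sub_cancel_right] at hbinom
  rw [sum_range_gClosed, hbinom, mul_sum]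
  refine sum_congr rfl fun s hs => ?_
  have h := congrArg (Nat.cast : ℕ → ℤ) (hchoose s hs)
  push_cast at h
  rw [show m + 2 - (s + 1) = m + 1 - s by omega]
  linear_combination ((-1) ^ s * ((i : ℤ) + 1) ^ (m + 1 - s)) * h

lemma g_zero (i x n : ℕ) : g i 0 x n = i * (n + 2) + x + 1 := rfl

lemma g_succ (i m x n : ℕ) :
    g i (m + 1) x n =
      ∑ a ∈ range (x + 1), g i m a n + ∑ j ∈ range i, ∑ a ∈ range (n + 1 - m), g j m a n := rfl

lemma g_eq_gClosed (n : ℕ) :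
    ∀ m x i, x + m ≤ n → (g i m x n : ℤ) = gClosed n m i (n - m - x)
  | 0, x, i, hx => by
    simp only [g_zero, gClosed, sum_range_succ, range_one, sum_singleton, zero_add, Nat.sub_zero,
      Nat.sub_self, Nat.choose_zero_right, Nat.choose_one_right]
    push_cast [Nat.cast_sub (show x ≤ n by omega)]
    ring
  | m + 1, x, i, hx => by
    have hpartial : ∀ j x', x' ≤ n - m → ∑ a ∈ range (x' + 1), (g j m a n : ℤ) =
        ∑ t ∈ range (n - m + 1), gClosed n m j t - ∑ t ∈ range (n - m - x'), gClosed n m j t := by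
      intro j x' hx'
      rw [← sum_range_sub_reflect _ hx']
      exact sum_congr rfl fun a ha => g_eq_gClosed n m a j (by rw [mem_range] at ha; omega)
    have hrow : ∀ j, ∑ a ∈ range (n + 1 - m), (g j m a n : ℤ) =
        ((n + 2).choose (m + 2) : ℤ) * (((j : ℤ) + 1) ^ (m + 2) - (j : ℤ) ^ (m + 2)) := by
      intro j
      rw [show n + 1 - m = n - m + 1 by omega, hpartial j (n - m) le_rfl, Nat.sub_self,
        sum_range_zero, sub_zero, sum_range_gClosed_row (by omega)]
    rw [g_succ]
    push_cast
    rw [hpartial i x (by omega), sum_congr rfl fun j _ => hrow j,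
      sum_range_mul_succ_pow_sub_pow _ (by omega), sum_range_gClosed_row (by omega),
      show n - m - x = n - (m + 1) - x + 1 by omega, gClosed_succ]
    ring

lemma sum_range_g {n m : ℕ} (hm : m ≤ n) (i : ℕ) :
    ∑ x ∈ range (n + 1 - m), (g i m x n : ℤ) =
      ((n + 2).choose (m + 2) : ℤ) * (((i : ℤ) + 1) ^ (m + 2) - (i : ℤ) ^ (m + 2)) := by
  rw [show n + 1 - m = n - m + 1 by omega, ← sum_range_gClosed_row hm,
    ← sum_range_reflect (gClosed n m i), Nat.add_sub_cancel]
  exact sum_congr rfl fun x hx => g_eq_gClosed n m x i (by rw [mem_range] at hx; omega)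

lemma Δ_eq (i n : ℕ) :
    (Δ i n : ℤ) = ∑ m ∈ range (n + 1),
      ((n + 2).choose (m + 2) : ℤ) * (((i : ℤ) + 1) ^ (m + 2) - (i : ℤ) ^ (m + 2)) := by
  rw [Δ]
  push_cast
  exact sum_congr rfl fun m hm => sum_range_g (by rw [mem_range] at hm; omega) i

lemma sum_range_Δ (k n : ℕ) :
    ∑ i ∈ range (k + 1), Δ i n =
      ∑ m ∈ range (n + 1), (n + 2).choose (m + 2) * (k + 1) ^ (m + 2) := by
  have h : (∑ i ∈ range (k + 1), Δ i n : ℤ) =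
      ∑ m ∈ range (n + 1), ((n + 2).choose (m + 2) : ℤ) * ((k : ℤ) + 1) ^ (m + 2) := by
    simp_rw [Δ_eq]
    rw [sum_comm]
    refine sum_congr rfl fun m _ => ?_
    rw [sum_range_mul_succ_pow_sub_pow _ (by omega)]
    push_cast
    rfl
  exact_mod_cast h

theorem moessner (k n : ℕ) : M k n = (k + 2) ^ (n + 2) := by
  rw [M, sum_range_Δ, show k + 2 = k + 1 + 1 from rfl, add_one_pow_add_two]
  push_cast
  ring
end

section
/- For all natural numbers n, M₀(n) = 2^(n+2). -/
def f : ℕ → ℕ → ℕ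
  | 0, x => x + 1
  | m + 1, x => ∑ a ∈ Finset.range (x + 1), f m a

def B (n : ℕ) : ℕ := ∑ m ∈ Finset.range (n + 1), ∑ x ∈ Finset.range (n + 1 - m), f m x

def M₀ (n : ℕ) : ℕ := (n + 3) + B n

lemma hockey (k x : ℕ) :
    ∑ a ∈ Finset.range (x + 1), Nat.choose (a + k) k = Nat.choose (x + k + 1) (k + 1) := by
  induction x with
  | zero => simp
  | succ x ih =>
      rw [Finset.sum_range_succ, ih]
      have : x + 1 + k + 1 = (x + k + 1) + 1 := by ring
      rw [this, Nat.choose_succ_succ (x + k + 1) k]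
      have : x + 1 + k = x + k + 1 := by ring
      rw [this]
      ring

lemma f_eq (m x : ℕ) : f m x = Nat.choose (x + m + 1) (m + 1) := by
  induction m generalizing x with
  | zero => simp [f, Nat.choose_one_right]
  | succ m ih =>
      rw [f]
      simp only [ih]
      have := hockey (m + 1) x
      simp only [show ∀ a : ℕ, a + m + 1 = a + (m + 1) by intro a; ring] at *
      rw [this]

theorem moessner_col0 (n : ℕ) : M₀ n = 2 ^ (n + 2) := by
  have hB : B n = ∑ m ∈ Finset.range (n + 1), Nat.choose (n + 2) (m + 2) := by
    unfold B
    apply Finset.sum_congr rfl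
    intro m hm
    rw [Finset.mem_range] at hm
    have hle : m ≤ n := Nat.lt_succ_iff.mp hm
    calc ∑ x ∈ Finset.range (n + 1 - m), f m x
        = ∑ x ∈ Finset.range (n - m + 1), Nat.choose (x + (m + 1)) (m + 1) := by
          rw [show n + 1 - m = n - m + 1 by omega]
          apply Finset.sum_congr rfl
          intro x _
          rw [f_eq]
          congr 1
      _ = Nat.choose (n - m + (m + 1) + 1) (m + 1 + 1) := hockey (m + 1) (n - m)
      _ = Nat.choose (n + 2) (m + 2) := by
          congr 1 <;> omega
  have h2 : ∑ j ∈ Finset.range (n + 3), Nat.choose (n + 2) j = 2 ^ (n + 2) :=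
    Nat.sum_range_choose (n + 2)
  have hsplit : ∑ j ∈ Finset.range (n + 3), Nat.choose (n + 2) j
      = Nat.choose (n + 2) 0 + Nat.choose (n + 2) 1 +
        ∑ m ∈ Finset.range (n + 1), Nat.choose (n + 2) (m + 2) := by
    rw [show n + 3 = (n + 2) + 1 by ring, Finset.sum_range_succ',
        show n + 2 = (n + 1) + 1 by ring, Finset.sum_range_succ']
    simp [Nat.choose_one_right]
    ring
  simp [Nat.choose_one_right] at hsplit
  unfold M₀
  rw [hB]
  omega
end

section
/- For all natural numbers i, x, and n, g i 1 x (n+1) = g i 1 x n + g i 0 x n · i. -/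
theorem g_one_level_step (i x n : ℕ) :
    g i 1 x (n + 1) = g i 1 x n + g i 0 x n * i := by
  simp only [g, gAux, Nat.sub_zero]
  have L1 : ∀ k c : ℕ, ∑ a ∈ Finset.range k, (c * (n + 1 + 2) + a + 1)
      = (∑ a ∈ Finset.range k, (c * (n + 2) + a + 1)) + k * c := by
    intro k c
    induction k with
    | zero => simp
    | succ k ih => rw [Finset.sum_range_succ, Finset.sum_range_succ, ih]; ring
  have L2 : ∀ j : ℕ, ∑ a ∈ Finset.range (n + 1 + 1), (j * (n + 1 + 2) + a + 1)
      = (∑ a ∈ Finset.range (n + 1), (j * (n + 2) + a + 1)) + (2 * j * (n + 2) + (n + 2)) := by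
    intro j
    rw [Finset.sum_range_succ, L1 (n+1) j]
    ring
  have L3 : ∑ j ∈ Finset.range i, (2 * j * (n + 2) + (n + 2)) = i * i * (n + 2) := by
    induction i with
    | zero => simp
    | succ i ih => rw [Finset.sum_range_succ, ih]; ring
  have L4 : (∑ j ∈ Finset.range i, ((∑ a ∈ Finset.range (n + 1), (j * (n + 2) + a + 1)) + (2 * j * (n + 2) + (n + 2))))
      = (∑ j ∈ Finset.range i, ∑ a ∈ Finset.range (n + 1), (j * (n + 2) + a + 1)) + i * i * (n + 2) := by
    rw [Finset.sum_add_distrib, L3]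
  rw [L1 (x+1) i, Finset.sum_congr rfl (fun j _ => L2 j), L4]
  ring
end

section
/- For all natural numbers i, m, x, and n, g i (m+1) x (n+1) = g i (m+1) x n + g i m x n · i; that is, the increment of each entry of Moessner's sieve under raising the level by one equals i times the entry one row earlier. -/
lemma sq_sum (i : ℕ) : ∑ j ∈ Finset.range i, (2 * j + 1) = i * i := by
  induction i with
  | zero => simp
  | succ k ih => rw [Finset.sum_range_succ, ih]; ring

lemma tri_sum (i : ℕ) (f : ℕ → ℕ) :
    ∑ j ∈ Finset.range i, ((1 + j) * f j + ∑ j' ∈ Finset.range j, f j') =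
      i * ∑ j ∈ Finset.range i, f j := by
  induction i with
  | zero => simp
  | succ k ih =>
    rw [Finset.sum_range_succ, ih, Finset.sum_range_succ]
    ring

lemma key (i m n : ℕ) :
    ∑ j ∈ Finset.range i, ∑ a ∈ Finset.range (n + 1 - m),
        (gAux (m + 1) j a n + gAux m j a n * j) =
      ∑ j ∈ Finset.range i, ∑ a ∈ Finset.range (n - m), gAux (m + 1) j a n +
        (∑ j ∈ Finset.range i, ∑ a ∈ Finset.range (n + 1 - m), gAux m j a n) * i := by
  rcases le_or_gt m n with h | h
  · have hnm : n + 1 - m = (n - m) + 1 := by omega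
    set f : ℕ → ℕ := fun j => ∑ a ∈ Finset.range (n + 1 - m), gAux m j a n with hf
    have hg : ∀ j, gAux (m + 1) j (n - m) n = f j + ∑ j' ∈ Finset.range j, f j' := by
      intro j
      show (∑ a ∈ Finset.range (n - m + 1), gAux m j a n) +
          ∑ j' ∈ Finset.range j, ∑ a ∈ Finset.range (n + 1 - m), gAux m j' a n = _
      rw [← hnm]
    have step1 : ∀ j, ∑ a ∈ Finset.range (n + 1 - m),
        (gAux (m + 1) j a n + gAux m j a n * j) =
        (∑ a ∈ Finset.range (n - m), gAux (m + 1) j a n) +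
          ((1 + j) * f j + ∑ j' ∈ Finset.range j, f j') := by
      intro j
      rw [Finset.sum_add_distrib, ← Finset.sum_mul, hnm, Finset.sum_range_succ, hg, ← hnm]
      show _ + f j * j = _
      ring
    calc ∑ j ∈ Finset.range i, ∑ a ∈ Finset.range (n + 1 - m),
            (gAux (m + 1) j a n + gAux m j a n * j)
        = ∑ j ∈ Finset.range i, ((∑ a ∈ Finset.range (n - m), gAux (m + 1) j a n) +
            ((1 + j) * f j + ∑ j' ∈ Finset.range j, f j')) := by
          exact Finset.sum_congr rfl fun j _ => step1 j
      _ = ∑ j ∈ Finset.range i, ∑ a ∈ Finset.range (n - m), gAux (m + 1) j a n +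
            ∑ j ∈ Finset.range i, ((1 + j) * f j + ∑ j' ∈ Finset.range j, f j') := by
          rw [Finset.sum_add_distrib]
      _ = _ := by rw [tri_sum]; ring
  · have h1 : n + 1 - m = 0 := by omega
    have h2 : n - m = 0 := by omega
    simp [h1, h2]

theorem g_level_step (i m x n : ℕ) :
    g i (m + 1) x (n + 1) = g i (m + 1) x n + g i m x n * i := by
  induction m generalizing i x with
  | zero =>
    show gAux 1 i x (n + 1) = gAux 1 i x n + gAux 0 i x n * i
    have Lb : ∀ j a : ℕ, gAux 0 j a (n + 1) = gAux 0 j a n + j := by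
      intro j a; show j * (n + 1 + 2) + a + 1 = j * (n + 2) + a + 1 + j; ring
    show (∑ a ∈ Finset.range (x + 1), gAux 0 i a (n + 1)) +
        ∑ j ∈ Finset.range i, ∑ a ∈ Finset.range (n + 1 + 1 - 0), gAux 0 j a (n + 1) = _
    have h2 : ∀ j ∈ Finset.range i, ∑ a ∈ Finset.range (n + 1 + 1 - 0), gAux 0 j a (n + 1) =
        ∑ a ∈ Finset.range (n + 1 - 0), gAux 0 j a n + (n + 2) * (2 * j + 1) := by
      intro j _
      simp only [Nat.sub_zero]
      rw [Finset.sum_range_succ]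
      simp only [Lb, Finset.sum_add_distrib, Finset.sum_const, Finset.card_range,
        smul_eq_mul]
      have hg0 : gAux 0 j (n + 1) n = j * (n + 2) + (n + 1) + 1 := rfl
      rw [hg0]
      ring
    have h1 : ∑ a ∈ Finset.range (x + 1), gAux 0 i a (n + 1) =
        ∑ a ∈ Finset.range (x + 1), gAux 0 i a n + (x + 1) * i := by
      simp only [Lb, Finset.sum_add_distrib, Finset.sum_const, Finset.card_range,
        smul_eq_mul]
    rw [Finset.sum_congr rfl h2, h1, Finset.sum_add_distrib, ← Finset.mul_sum, sq_sum]
    show _ = (∑ a ∈ Finset.range (x + 1), gAux 0 i a n +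
        ∑ j ∈ Finset.range i, ∑ a ∈ Finset.range (n + 1 - 0), gAux 0 j a n) +
        (i * (n + 2) + x + 1) * i
    ring
  | succ m ih =>
    show gAux (m + 2) i x (n + 1) = gAux (m + 2) i x n + gAux (m + 1) i x n * i
    have hsub : n + 1 + 1 - (m + 1) = n + 1 - m := by omega
    have hsub2 : n + 1 - (m + 1) = n - m := by omega
    show (∑ a ∈ Finset.range (x + 1), gAux (m + 1) i a (n + 1)) +
        ∑ j ∈ Finset.range i, ∑ a ∈ Finset.range (n + 1 + 1 - (m + 1)),
          gAux (m + 1) j a (n + 1) =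
      ((∑ a ∈ Finset.range (x + 1), gAux (m + 1) i a n) +
        ∑ j ∈ Finset.range i, ∑ a ∈ Finset.range (n + 1 - (m + 1)), gAux (m + 1) j a n) +
      ((∑ a ∈ Finset.range (x + 1), gAux m i a n) +
        ∑ j ∈ Finset.range i, ∑ a ∈ Finset.range (n + 1 - m), gAux m j a n) * i
    rw [hsub, hsub2]
    have hih : ∀ j a : ℕ, gAux (m + 1) j a (n + 1) = gAux (m + 1) j a n + gAux m j a n * j :=
      fun j a => ih j a
    simp only [hih]
    rw [Finset.sum_add_distrib]
    have := key i m n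
    rw [this]
    rw [add_mul, ← Finset.sum_mul]
    ring
end

section
/- For all natural numbers i, m, and n with m ≤ n, Σ_{j=0}^{i-1} g j (m+1) (n-m) n = Σ_{a=0}^{n-m} Σ_{u=0}^{i-1} g u m a n · (i-u). -/
theorem g_diag_sum_swap (i m n : ℕ) (h : m ≤ n) :
    (∑ j ∈ Finset.range i, g j (m + 1) (n - m) n) =
      ∑ a ∈ Finset.range (n - m + 1), ∑ u ∈ Finset.range i, g u m a n * (i - u) := by
  induction i with
  | zero => simp
  | succ i ih =>
    rw [Finset.sum_range_succ, ih]
    have hnm : n + 1 - m = n - m + 1 := by omega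
    have hg : g i (m+1) (n-m) n =
        (∑ a ∈ Finset.range (n - m + 1), g i m a n) +
        ∑ j ∈ Finset.range i, ∑ a ∈ Finset.range (n - m + 1), g j m a n := by
      show gAux (m+1) i (n-m) n = _
      rw [gAux, hnm]; rfl
    rw [hg, Finset.sum_comm (s := Finset.range i)]
    rw [← Finset.sum_add_distrib, ← Finset.sum_add_distrib]
    apply Finset.sum_congr rfl
    intro a _
    rw [Finset.sum_range_succ]
    have hstep : ∀ u ∈ Finset.range i, g u m a n * (i+1-u) = g u m a n * (i-u) + g u m a n := by
      intro u hu
      simp only [Finset.mem_range] at hu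
      have : i + 1 - u = (i - u) + 1 := by omega
      rw [this, Nat.mul_succ]
    rw [Finset.sum_congr rfl hstep, Finset.sum_add_distrib]
    simp
    ring
end

section
/- For all natural numbers k and n, the diagonal sum V(k+1,n) := Σ_{a=0}^{n+1} g (k+1) a (n+1-a) n satisfies V(k+1,n) = g (k+1) 0 (n+1) n + Σ_{i=0}^{k+1} Δ i n. -/
theorem diag_sum_eq_gen (k n : ℕ) :
    (∑ a ∈ Finset.range (n + 2), g (k + 1) a (n + 1 - a) n) =
      g (k + 1) 0 (n + 1) n + ∑ i ∈ Finset.range (k + 2), Δ i n := by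
  rw [Finset.sum_range_succ']
  have key : ∀ a ∈ Finset.range (n + 1),
      g (k + 1) (a + 1) (n + 1 - (a + 1)) n =
        ∑ j ∈ Finset.range (k + 2), ∑ x ∈ Finset.range (n + 1 - a), g j a x n := by
    intro a ha
    rw [Finset.mem_range] at ha
    have h1 : n + 1 - (a + 1) = n - a := by omega
    have h2 : n - a + 1 = n + 1 - a := by omega
    show gAux (a + 1) (k + 1) (n + 1 - (a + 1)) n = _
    rw [h1]
    show (∑ b ∈ Finset.range (n - a + 1), gAux a (k + 1) b n) +
        ∑ j ∈ Finset.range (k + 1), ∑ b ∈ Finset.range (n + 1 - a), gAux a j b n = _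
    rw [h2]
    simp only [g]
    conv_rhs => rw [Finset.sum_range_succ]
    exact add_comm _ _
  rw [Finset.sum_congr rfl key, Finset.sum_comm]
  simp [Δ]
  ring
end

section
/- For all natural numbers k and n, V(k+1,n) + 1 = M(k+1,n), where V(k+1,n) := Σ_{a=0}^{n+1} g (k+1) a (n+1-a) n is the extra-diagonal sum. -/
theorem diag_sum_succ_eq_M (k n : ℕ) :
    (∑ a ∈ Finset.range (n + 2), g (k + 1) a (n + 1 - a) n) + 1 = M (k + 1) n := by
  have h1 : ∀ a ∈ Finset.range (n + 1),
      g (k + 1) (a + 1) (n + 1 - (a + 1)) n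
        = ∑ j ∈ Finset.range (k + 2), ∑ b ∈ Finset.range (n + 1 - a), g j a b n := by
    intro a ha
    simp only [Finset.mem_range] at ha
    have h2 : n + 1 - (a + 1) = n - a := by omega
    have h3 : n - a + 1 = n + 1 - a := by omega
    rw [h2]
    show gAux (a + 1) (k + 1) (n - a) n = _
    rw [Finset.sum_range_succ]
    simp [gAux, g, h3, Nat.add_comm]
  rw [Finset.sum_range_succ', Finset.sum_congr rfl h1, Finset.sum_comm]
  have h0 : g (k + 1) 0 (n + 1 - 0) n = (k + 2) * (n + 2) := by
    show gAux 0 (k + 1) (n + 1) n = _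
    simp [gAux]; ring
  rw [h0]
  simp only [M, Δ]
  ring
end

section
/- For all natural numbers k and n, H(k+1,n) = (n+2)·(k+1) + Δ(k+1,n)·(k+1), where H(i,n) := Σ_{m=0}^{n+1} Σ_{x=0}^{n+1-m} (g i m x (n+1) - g i m x n) is the total increment of the triangle entries when the level parameter passes from n to n+1. -/
lemma gAux_succ_def (m i x n : ℕ) :
    gAux (m + 1) i x n =
      (∑ a ∈ Finset.range (x + 1), gAux m i a n) +
        ∑ j ∈ Finset.range i, ∑ a ∈ Finset.range (n + 1 - m), gAux m j a n := rfl

lemma swap_sum (T : ℕ → ℕ) (i : ℕ) :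
    ∑ j ∈ Finset.range i, (j * T j + ∑ l ∈ Finset.range (j + 1), T l) =
      i * ∑ j ∈ Finset.range i, T j := by
  induction i with
  | zero => simp
  | succ i ih =>
      rw [Finset.sum_range_succ, ih, Finset.sum_range_succ (f := T)]
      ring

lemma gauss_aux (c i : ℕ) :
    ∑ j ∈ Finset.range i, (2 * j * c + c) = i * i * c := by
  induction i with
  | zero => simp
  | succ i ih => rw [Finset.sum_range_succ, ih]; ring

lemma g_succ_s14 : ∀ m i x n : ℕ,
    gAux (m + 1) i x (n + 1) = gAux (m + 1) i x n + i * gAux m i x n := by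
  intro m
  induction m with
  | zero =>
      intro i x n
      rw [gAux_succ_def, gAux_succ_def]
      simp only [Nat.sub_zero]
      have h1 : ∑ a ∈ Finset.range (x + 1), gAux 0 i a (n + 1)
          = (∑ a ∈ Finset.range (x + 1), gAux 0 i a n) + (x + 1) * i := by
        rw [show (x + 1) * i = ∑ _a ∈ Finset.range (x + 1), i by
          rw [Finset.sum_const, Finset.card_range, smul_eq_mul]]
        rw [← Finset.sum_add_distrib]
        refine Finset.sum_congr rfl fun a _ => ?_
        show i * (n + 1 + 2) + a + 1 = i * (n + 2) + a + 1 + i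
        ring
      have h2 : ∀ j, ∑ a ∈ Finset.range (n + 1 + 1), gAux 0 j a (n + 1)
          = (∑ a ∈ Finset.range (n + 1), gAux 0 j a n) + (2 * j * (n + 2) + (n + 2)) := by
        intro j
        rw [Finset.sum_range_succ]
        have h3 : ∑ a ∈ Finset.range (n + 1), gAux 0 j a (n + 1)
            = (∑ a ∈ Finset.range (n + 1), gAux 0 j a n) + (n + 1) * j := by
          rw [show (n + 1) * j = ∑ _a ∈ Finset.range (n + 1), j by
            rw [Finset.sum_const, Finset.card_range, smul_eq_mul]]
          rw [← Finset.sum_add_distrib]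
          refine Finset.sum_congr rfl fun a _ => ?_
          show j * (n + 1 + 2) + a + 1 = j * (n + 2) + a + 1 + j
          ring
        rw [h3]
        show _ + (j * (n + 1 + 2) + (n + 1) + 1) = _
        ring
      rw [h1, show (∑ j ∈ Finset.range i, ∑ a ∈ Finset.range (n + 1 + 1), gAux 0 j a (n + 1))
          = ∑ j ∈ Finset.range i, ((∑ a ∈ Finset.range (n + 1), gAux 0 j a n)
              + (2 * j * (n + 2) + (n + 2))) from Finset.sum_congr rfl fun j _ => h2 j]
      rw [Finset.sum_add_distrib, gauss_aux (n + 2) i]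
      show _ = _ + i * (i * (n + 2) + x + 1)
      ring
  | succ m ih =>
      intro i x n
      rw [gAux_succ_def (m + 1) i x (n + 1), gAux_succ_def (m + 1) i x n,
        gAux_succ_def m i x n]
      have h1 : ∑ a ∈ Finset.range (x + 1), gAux (m + 1) i a (n + 1)
          = (∑ a ∈ Finset.range (x + 1), gAux (m + 1) i a n)
            + i * ∑ a ∈ Finset.range (x + 1), gAux m i a n := by
        rw [Finset.mul_sum, ← Finset.sum_add_distrib]
        exact Finset.sum_congr rfl fun a _ => ih i a n
      rcases le_or_gt m n with hmn | hmn
      · have hw1 : n + 1 + 1 - (m + 1) = (n - m) + 1 := by omega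
        have hw2 : n + 1 - (m + 1) = n - m := by omega
        have hw3 : n + 1 - m = (n - m) + 1 := by omega
        rw [hw1, hw2, hw3, h1]
        set T : ℕ → ℕ := fun j => ∑ a ∈ Finset.range ((n - m) + 1), gAux m j a n with hT
        have h2 : ∀ j, ∑ a ∈ Finset.range ((n - m) + 1), gAux (m + 1) j a (n + 1)
            = (∑ a ∈ Finset.range (n - m), gAux (m + 1) j a n)
              + (j * T j + ∑ l ∈ Finset.range (j + 1), T l) := by
          intro j
          rw [Finset.sum_range_succ]
          have h3 : ∑ a ∈ Finset.range (n - m), gAux (m + 1) j a (n + 1)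
              = (∑ a ∈ Finset.range (n - m), gAux (m + 1) j a n)
                + j * ∑ a ∈ Finset.range (n - m), gAux m j a n := by
            rw [Finset.mul_sum, ← Finset.sum_add_distrib]
            exact Finset.sum_congr rfl fun a _ => ih j a n
          rw [h3, ih j (n - m) n, gAux_succ_def m j (n - m) n, hw3]
          have hTl : ∑ l ∈ Finset.range (j + 1), T l
              = (∑ l ∈ Finset.range j, T l) + T j := Finset.sum_range_succ T j
          rw [hTl, hT]
          simp only
          rw [Finset.sum_range_succ (fun a => gAux m j a n) (n - m)]
          ring
        rw [show (∑ j ∈ Finset.range i, ∑ a ∈ Finset.range ((n - m) + 1), gAux (m + 1) j a (n + 1))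
            = ∑ j ∈ Finset.range i, ((∑ a ∈ Finset.range (n - m), gAux (m + 1) j a n)
                + (j * T j + ∑ l ∈ Finset.range (j + 1), T l))
            from Finset.sum_congr rfl fun j _ => h2 j]
        rw [Finset.sum_add_distrib, swap_sum T i]
        ring
      · have hw4 : n + 1 + 1 - (m + 1) = 0 := by omega
        have hw2 : n + 1 - (m + 1) = 0 := by omega
        have hw5 : n + 1 - m = 0 := by omega
        rw [hw4, hw2, hw5, h1]
        simp only [Finset.range_zero, Finset.sum_empty, Finset.sum_const_zero]
        ring

theorem increment_sum_eq (k n : ℕ) :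
    (∑ m ∈ Finset.range (n + 2), ∑ x ∈ Finset.range (n + 1 - m + 1),
        (g (k + 1) m x (n + 1) - g (k + 1) m x n)) =
      (n + 2) * (k + 1) + Δ (k + 1) n * (k + 1) := by
  have key : ∀ m x, g (k + 1) (m + 1) x (n + 1) - g (k + 1) (m + 1) x n
      = (k + 1) * g (k + 1) m x n := by
    intro m x
    show gAux (m + 1) (k + 1) x (n + 1) - gAux (m + 1) (k + 1) x n
      = (k + 1) * gAux m (k + 1) x n
    rw [g_succ_s14]
    omega
  have key0 : ∀ x, g (k + 1) 0 x (n + 1) - g (k + 1) 0 x n = k + 1 := by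
    intro x
    show (k + 1) * (n + 1 + 2) + x + 1 - ((k + 1) * (n + 2) + x + 1) = k + 1
    have : (k + 1) * (n + 1 + 2) = (k + 1) * (n + 2) + (k + 1) := by ring
    omega
  rw [Finset.sum_range_succ']
  have hrow0 : ∑ x ∈ Finset.range (n + 1 - 0 + 1), (g (k + 1) 0 x (n + 1) - g (k + 1) 0 x n)
      = (n + 2) * (k + 1) := by
    rw [show (∑ x ∈ Finset.range (n + 1 - 0 + 1), (g (k + 1) 0 x (n + 1) - g (k + 1) 0 x n))
        = ∑ x ∈ Finset.range (n + 1 - 0 + 1), (k + 1)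
        from Finset.sum_congr rfl fun x _ => key0 x]
    rw [Finset.sum_const, Finset.card_range, smul_eq_mul]
    simp only [Nat.sub_zero]
  rw [hrow0]
  have hrows : ∑ m ∈ Finset.range (n + 1),
      ∑ x ∈ Finset.range (n + 1 - (m + 1) + 1), (g (k + 1) (m + 1) x (n + 1) - g (k + 1) (m + 1) x n)
      = (k + 1) * Δ (k + 1) n := by
    unfold Δ
    rw [Finset.mul_sum]
    refine Finset.sum_congr rfl fun m hm => ?_
    have hm' : m < n + 1 := Finset.mem_range.mp hm
    have hw : n + 1 - (m + 1) + 1 = n + 1 - m := by omega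
    rw [hw, Finset.mul_sum]
    exact Finset.sum_congr rfl fun x _ => key m x
  rw [hrows]
  ring
end
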